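/- arXiv:2407.08928 — 4 statements merged into one kernel-verified Lean document; each statement's English description precedes it below -/
import Mathlib

section
/- Assume (H): $H,G\in C^2([0,\infty))$ with $H(0)=G(0)=0$, $H'>0$ and $G'>0$ on $[0,\infty)$, $H''<0$ and $G''<0$ on $(0,\infty)$, and $G(H(\hat z)/a)<b\hat z$ for some $\hat z>0$, where $a,b>0$. If $H'(0)G'(0)>ab$, then the system $au=H(v)$, $bv=G(u)$ has exactly one root $(u^*,v^*)$ with $u^*>0$ and $v^*>0$. -/
/-! The substitution `u = H(v)/a` reduces the system to the scalar equation `φ(v) = b v` with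
`φ = G ∘ (H / a)`. As a monotone concave function of a strictly concave one, `φ` is strictly
concave on `[0, ∞)` with `φ(0) = 0`, so `φ(v)/v` is strictly decreasing on `(0, ∞)`; this gives
uniqueness. It tends to `φ'(0) = G'(0)H'(0)/a > b` as `v → 0⁺` and is below `b` at `ẑ`, so the
intermediate value theorem gives existence. -/

open Set Filter Topology

theorem ConcaveOn.comp_strictConcaveOn_of_mapsTo {𝕜 E β γ : Type*} [Semiring 𝕜] [PartialOrder 𝕜]
    [AddCommMonoid E] [AddCommMonoid β] [PartialOrder β] [AddCommMonoid γ] [PartialOrder γ]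
    [SMul 𝕜 E] [SMul 𝕜 β] [SMul 𝕜 γ] {s : Set E} {t : Set β} {f : E → β} {g : β → γ}
    (hg : ConcaveOn 𝕜 t g) (hf : StrictConcaveOn 𝕜 s f) (hg' : StrictMonoOn g t)
    (hst : MapsTo f s t) : StrictConcaveOn 𝕜 s (g ∘ f) :=
  ⟨hf.1, fun _ hx _ hy hxy _ _ ha hb hab =>
    (hg.2 (hst hx) (hst hy) ha.le hb.le hab).trans_lt <|
      hg' (hg.1 (hst hx) (hst hy) ha.le hb.le hab) (hst (hf.1 hx hy ha.le hb.le hab))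
        (hf.2 hx hy hxy ha hb hab)⟩

theorem StrictConcaveOn.div_const {𝕜 E : Type*} [Field 𝕜] [LinearOrder 𝕜] [IsStrictOrderedRing 𝕜]
    [AddCommMonoid E] [SMul 𝕜 E] {s : Set E} {f : E → 𝕜} {c : 𝕜} (hf : StrictConcaveOn 𝕜 s f)
    (hc : 0 < c) : StrictConcaveOn 𝕜 s fun x => f x / c :=
  ⟨hf.1, fun x hx y hy hxy a b ha hb hab =>
    calc a • (f x / c) + b • (f y / c) = (a • f x + b • f y) / c := by simp only [smul_eq_mul]; ring
      _ < f (a • x + b • y) / c := div_lt_div_of_pos_right (hf.2 hx hy hxy ha hb hab) hc⟩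

theorem StrictConcaveOn.strictAntiOn_div_self {𝕜 : Type*} [Field 𝕜] [LinearOrder 𝕜]
    [IsStrictOrderedRing 𝕜] {f : 𝕜 → 𝕜} (hf : StrictConcaveOn 𝕜 (Ici 0) f) (h0 : f 0 = 0) :
    StrictAntiOn (fun x => f x / x) (Ioi 0) := fun x hx y hy hxy => by
  simpa [h0] using hf.secant_strict_mono self_mem_Ici (mem_Ici.2 (le_of_lt hx))
    (mem_Ici.2 (le_of_lt hy)) hx.ne' hy.ne' hxy

theorem StrictConcaveOn.existsUnique_pos_eq_mul {φ : ℝ → ℝ} {φ' c zhat : ℝ}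
    (hφ : StrictConcaveOn ℝ (Ici 0) φ) (h0 : φ 0 = 0) (hderiv : HasDerivWithinAt φ φ' (Ioi 0) 0)
    (hc : c < φ') (hzhat : 0 < zhat) (hlt : φ zhat < c * zhat) :
    ∃! z, 0 < z ∧ φ z = c * z := by
  have hanti := hφ.strictAntiOn_div_self h0
  have hcont : ContinuousOn (fun z => φ z / z) (Ioi 0) := by
    have hφcont := hφ.concaveOn.continuousOn_interior
    rw [interior_Ici] at hφcont
    exact hφcont.div continuousOn_id fun z hz => hz.ne'
  have hroot : ∀ z, 0 < z → (φ z = c * z ↔ φ z / z = c) := fun z hz =>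
    (div_eq_iff hz.ne').symm
  obtain ⟨z₀, hz₀, hcz₀⟩ : ∃ z₀, 0 < z₀ ∧ c < φ z₀ / z₀ := by
    have hslope := (hasDerivWithinAt_iff_tendsto_slope' (lt_irrefl 0)).1 hderiv
    have hev : ∀ᶠ z in 𝓝[>] 0, c < φ z / z :=
      (hslope.eventually (lt_mem_nhds hc)).mono fun z hz => by
        simpa [slope_def_field, h0] using hz
    obtain ⟨z, hz, hcz⟩ := (hev.and self_mem_nhdsWithin).exists
    exact ⟨z, hcz, hz⟩
  have hzhat' : φ zhat / zhat < c := (div_lt_iff₀ hzhat).2 hlt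
  have hz₀zhat : z₀ ≤ zhat := ((hanti.lt_iff_gt hzhat hz₀).1 (hzhat'.trans hcz₀)).le
  obtain ⟨z, hz, hφz⟩ := intermediate_value_Icc' hz₀zhat
    (hcont.mono fun z hz => hz₀.trans_le hz.1) ⟨hzhat'.le, hcz₀.le⟩
  have hzpos : 0 < z := hz₀.trans_le hz.1
  refine ⟨z, ⟨hzpos, (hroot z hzpos).2 hφz⟩, fun y ⟨hy, hφy⟩ => hanti.injOn hy hzpos ?_⟩
  simp only [(hroot y hy).1 hφy, hφz]

section DerivCriteria

variable {f : ℝ → ℝ} {D : Set ℝ}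

theorem continuousOn_of_deriv_ne_zero (hf : ∀ x ∈ D, deriv f x ≠ 0) : ContinuousOn f D :=
  fun x hx => (differentiableAt_of_deriv_ne_zero (hf x hx)).continuousAt.continuousWithinAt

theorem strictMonoOn_of_deriv_pos' (hD : Convex ℝ D) (hf : ∀ x ∈ D, 0 < deriv f x) :
    StrictMonoOn f D :=
  strictMonoOn_of_deriv_pos hD (continuousOn_of_deriv_ne_zero fun x hx => (hf x hx).ne')
    fun x hx => hf x (interior_subset hx)

theorem strictConcaveOn_of_deriv_pos_of_deriv2_neg (hD : Convex ℝ D)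
    (hf' : ∀ x ∈ D, 0 < deriv f x) (hf'' : ∀ x ∈ interior D, deriv (deriv f) x < 0) :
    StrictConcaveOn ℝ D f :=
  strictConcaveOn_of_deriv2_neg hD (continuousOn_of_deriv_ne_zero fun x hx => (hf' x hx).ne') hf''

end DerivCriteria

theorem existsUnique_pos_system_of_existsUnique {a b : ℝ} (ha : 0 < a) {H G : ℝ → ℝ}
    (hH : ∀ v, 0 < v → 0 < H v) (h : ∃! v, 0 < v ∧ G (H v / a) = b * v) :
    ∃! p : ℝ × ℝ, 0 < p.1 ∧ 0 < p.2 ∧ a * p.1 = H p.2 ∧ b * p.2 = G p.1 := by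
  obtain ⟨v, ⟨hv, hGv⟩, huniq⟩ := h
  refine ⟨(H v / a, v), ⟨div_pos (hH v hv) ha, hv, by field_simp, hGv.symm⟩, ?_⟩
  rintro ⟨u, w⟩ ⟨-, hw, huw, hwu⟩
  have hu : u = H w / a := by rw [← huw]; field_simp
  obtain rfl : w = v := huniq w ⟨hw, hu ▸ hwu.symm⟩
  rw [hu]

theorem stmt4_general (a b : ℝ) (ha : 0 < a) (H G : ℝ → ℝ)
    (hH0 : H 0 = 0) (hG0 : G 0 = 0)
    (hH' : ∀ z : ℝ, 0 ≤ z → 0 < deriv H z) (hG' : ∀ z : ℝ, 0 ≤ z → 0 < deriv G z)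
    (hH'' : ∀ z : ℝ, 0 < z → deriv (deriv H) z < 0)
    (hG'' : ∀ z : ℝ, 0 < z → deriv (deriv G) z < 0)
    (hhat : ∃ zhat : ℝ, 0 < zhat ∧ G (H zhat / a) < b * zhat)
    (hR0 : a * b < deriv H 0 * deriv G 0) :
    ∃! p : ℝ × ℝ, 0 < p.1 ∧ 0 < p.2 ∧ a * p.1 = H p.2 ∧ b * p.2 = G p.1 := by
  obtain ⟨zhat, hzhat, hlt⟩ := hhat
  have hH_mono := strictMonoOn_of_deriv_pos' (convex_Ici 0) hH'
  have hH_conc := strictConcaveOn_of_deriv_pos_of_deriv2_neg (convex_Ici 0) hH'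
    (by rw [interior_Ici]; exact hH'')
  have hG_conc := strictConcaveOn_of_deriv_pos_of_deriv2_neg (convex_Ici 0) hG'
    (by rw [interior_Ici]; exact hG'')
  have hφ : StrictConcaveOn ℝ (Ici 0) fun z => G (H z / a) :=
    hG_conc.concaveOn.comp_strictConcaveOn_of_mapsTo (hH_conc.div_const ha)
      (strictMonoOn_of_deriv_pos' (convex_Ici 0) hG')
      fun z hz => div_nonneg (hH0 ▸ hH_mono.monotoneOn self_mem_Ici hz hz) ha.le
  have hderiv : HasDerivAt (fun z => G (H z / a)) (deriv G 0 * (deriv H 0 / a)) 0 := by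
    have hG : HasDerivAt G (deriv G 0) (H 0 / a) := by
      rw [hH0, zero_div]; exact (differentiableAt_of_deriv_ne_zero (hG' 0 le_rfl).ne').hasDerivAt
    exact hG.comp 0 ((differentiableAt_of_deriv_ne_zero (hH' 0 le_rfl).ne').hasDerivAt.div_const a)
  refine existsUnique_pos_system_of_existsUnique ha
    (fun z hz => hH0 ▸ hH_mono self_mem_Ici hz.le hz)
    (hφ.existsUnique_pos_eq_mul (by simp [hH0, hG0]) hderiv.hasDerivWithinAt ?_ hzhat hlt)
  rw [mul_div_assoc', lt_div_iff₀ ha]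
  linarith

/-- Under hypothesis (H) and `H'(0)G'(0) > ab`, the system `au = H(v)`,
`bv = G(u)` has exactly one positive root `(u*, v*)`. -/
theorem stmt4 (a b : ℝ) (ha : 0 < a) (hb : 0 < b) (H G : ℝ → ℝ)
    (hHreg : ContDiffOn ℝ 2 H (Set.Ici 0)) (hGreg : ContDiffOn ℝ 2 G (Set.Ici 0))
    (hH0 : H 0 = 0) (hG0 : G 0 = 0)
    (hH' : ∀ z : ℝ, 0 ≤ z → 0 < deriv H z) (hG' : ∀ z : ℝ, 0 ≤ z → 0 < deriv G z)
    (hH'' : ∀ z : ℝ, 0 < z → deriv (deriv H) z < 0)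
    (hG'' : ∀ z : ℝ, 0 < z → deriv (deriv G) z < 0)
    (hhat : ∃ zhat : ℝ, 0 < zhat ∧ G (H zhat / a) < b * zhat)
    (hR0 : a * b < deriv H 0 * deriv G 0) :
    ∃! p : ℝ × ℝ, 0 < p.1 ∧ 0 < p.2 ∧ a * p.1 = H p.2 ∧ b * p.2 = G p.1 :=
  stmt4_general a b ha H G hH0 hG0 hH' hG' hH'' hG'' hhat hR0
end

section
/- Assume (H) with $a,b,d_1,d_2>0$, let $H'(0)G'(0)>ab$, and let $(u^*,v^*)$ be the unique positive root of $au=H(v)$, $bv=G(u)$. Define for $k>0$ the pair $\bar\varphi(x)=u^*\sin(kx)$ for $0\le x\le \pi/(2k)$, $\bar\varphi(x)=u^*$ for $x>\pi/(2k)$, and $\bar\psi(x)=v^*\sin(kx)$ for $0\le x\le\pi/(2k)$, $\bar\psi(x)=v^*$ for $x>\pi/(2k)$. If $k^2\ge \max\{H'(0)v^*/(d_1u^*),\, G'(0)u^*/(d_2v^*)\}$, then for every $c\ge 0$ and every $x\in(0,\pi/(2k))$: $d_1\bar\varphi''(x)-c\bar\varphi'(x)-a\bar\varphi(x)+H(\bar\psi(x))\le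 0$ and $d_2\bar\psi''(x)-c\bar\psi'(x)-b\bar\psi(x)+G(\bar\varphi(x))\le 0$; and for $x>\pi/(2k)$ both expressions equal $0$. -/
open Real

lemma tangent_bound (H : ℝ → ℝ) (hreg : ContDiffOn ℝ 2 H (Set.Ici 0)) (h0 : H 0 = 0)
    (h' : ∀ z : ℝ, 0 ≤ z → 0 < deriv H z) (h'' : ∀ z : ℝ, 0 < z → deriv (deriv H) z < 0) :
    ∀ z : ℝ, 0 < z → H z ≤ deriv H 0 * z := by
  have hdiff : ∀ z : ℝ, 0 ≤ z → DifferentiableAt ℝ H z := by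
    intro z hz
    by_contra h
    have := h' z hz
    rw [deriv_zero_of_not_differentiableAt h] at this
    exact lt_irrefl 0 this
  set g := derivWithin H (Set.Ici 0) with hg
  have hgcont : ContinuousOn g (Set.Ici 0) :=
    hreg.continuousOn_derivWithin (uniqueDiffOn_Ici 0) (by norm_num)
  have hg_eq : ∀ z : ℝ, 0 < z → g z = deriv H z := by
    intro z hz
    exact derivWithin_of_mem_nhds (Ici_mem_nhds hz)
  have hg0 : g 0 = deriv H 0 :=
    (hdiff 0 le_rfl).derivWithin ((uniqueDiffOn_Ici 0) 0 Set.self_mem_Ici)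
  have hganti : StrictAntiOn g (Set.Ici 0) := by
    apply strictAntiOn_of_deriv_neg (convex_Ici 0) hgcont
    intro z hz
    rw [interior_Ici] at hz
    have hev : g =ᶠ[nhds z] deriv H :=
      Filter.eventuallyEq_of_mem (Ioi_mem_nhds hz) (fun y hy => hg_eq y hy)
    rw [hev.deriv_eq]
    exact h'' z hz
  have hlt : ∀ z : ℝ, 0 < z → deriv H z < deriv H 0 := by
    intro z hz
    have := hganti Set.self_mem_Ici (Set.mem_Ici.mpr hz.le) hz
    rwa [hg0, hg_eq z hz] at this
  intro z hz
  set F := fun y : ℝ => deriv H 0 * y - H y with hF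
  have hFc : ContinuousOn F (Set.Ici 0) :=
    ((continuous_const.mul continuous_id).continuousOn).sub hreg.continuousOn
  have hFmono : StrictMonoOn F (Set.Ici 0) := by
    apply strictMonoOn_of_deriv_pos (convex_Ici 0) hFc
    intro y hy
    rw [interior_Ici] at hy
    have hhd : HasDerivAt F (deriv H 0 * 1 - deriv H y) y :=
      ((hasDerivAt_id y).const_mul (deriv H 0)).sub (hdiff y hy.le).hasDerivAt
    rw [hhd.deriv]
    have := hlt y hy
    linarith
  have := hFmono Set.self_mem_Ici (Set.mem_Ici.mpr hz.le) hz
  simp only [hF, h0, mul_zero, sub_zero] at this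
  linarith

lemma pw_derivs (k u L : ℝ) (φ : ℝ → ℝ)
    (hφ : ∀ x : ℝ, φ x = if x ≤ L then u * Real.sin (k * x) else u) :
    (∀ x < L, deriv φ x = u * k * Real.cos (k * x)) ∧
    (∀ x < L, deriv (deriv φ) x = -(u * k ^ 2 * Real.sin (k * x))) ∧
    (∀ x : ℝ, L < x → deriv φ x = 0) ∧
    (∀ x : ℝ, L < x → deriv (deriv φ) x = 0) := by
  have h1 : ∀ x < L, deriv φ x = u * k * Real.cos (k * x) := by
    intro x hx
    have hev : φ =ᶠ[nhds x] fun y => u * Real.sin (k * y) :=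
      Filter.eventuallyEq_of_mem (Iio_mem_nhds hx)
        (fun y hy => by rw [hφ, if_pos (le_of_lt (Set.mem_Iio.mp hy))])
    rw [hev.deriv_eq]
    have hhd : HasDerivAt (fun y => u * Real.sin (k * y))
        (u * (Real.cos (k * x) * (k * 1))) x :=
      (((Real.hasDerivAt_sin (k * x)).comp x
        ((hasDerivAt_id x).const_mul k))).const_mul u
    rw [hhd.deriv]; ring
  have h3 : ∀ x : ℝ, L < x → deriv φ x = 0 := by
    intro x hx
    have hev : φ =ᶠ[nhds x] fun _ => u :=
      Filter.eventuallyEq_of_mem (Ioi_mem_nhds hx)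
        (fun y hy => by rw [hφ, if_neg (not_le.mpr (Set.mem_Ioi.mp hy))])
    rw [hev.deriv_eq, deriv_const]
  refine ⟨h1, ?_, h3, ?_⟩
  · intro x hx
    have hev : deriv φ =ᶠ[nhds x] fun y => u * k * Real.cos (k * y) :=
      Filter.eventuallyEq_of_mem (Iio_mem_nhds hx) (fun y hy => h1 y hy)
    rw [hev.deriv_eq]
    have hhd : HasDerivAt (fun y => u * k * Real.cos (k * y))
        (u * k * (-Real.sin (k * x) * (k * 1))) x :=
      (((Real.hasDerivAt_cos (k * x)).comp x
        ((hasDerivAt_id x).const_mul k))).const_mul (u * k)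
    rw [hhd.deriv]; ring
  · intro x hx
    have hev : deriv φ =ᶠ[nhds x] fun _ => (0 : ℝ) :=
      Filter.eventuallyEq_of_mem (Ioi_mem_nhds hx) (fun y hy => h3 y hy)
    rw [hev.deriv_eq, deriv_const]

/-- The explicit pair `(ū, v̄)` built from `sin(kx)` capped at `(u*, v*)` is an
upper solution of the semi-wave system for every speed `c ≥ 0`, provided
`k² ≥ max{H'(0)v*/(d₁u*), G'(0)u*/(d₂v*)}`. -/
theorem stmt6 (a b d1 d2 : ℝ) (ha : 0 < a) (hb : 0 < b)
    (hd1 : 0 < d1) (hd2 : 0 < d2) (H G : ℝ → ℝ)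
    (hHreg : ContDiffOn ℝ 2 H (Set.Ici 0)) (hGreg : ContDiffOn ℝ 2 G (Set.Ici 0))
    (hH0 : H 0 = 0) (hG0 : G 0 = 0)
    (hH' : ∀ z : ℝ, 0 ≤ z → 0 < deriv H z) (hG' : ∀ z : ℝ, 0 ≤ z → 0 < deriv G z)
    (hH'' : ∀ z : ℝ, 0 < z → deriv (deriv H) z < 0)
    (hG'' : ∀ z : ℝ, 0 < z → deriv (deriv G) z < 0)
    (hhat : ∃ zhat : ℝ, 0 < zhat ∧ G (H zhat / a) < b * zhat)
    (hR0 : a * b < deriv H 0 * deriv G 0)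
    (ustar vstar : ℝ) (hu : 0 < ustar) (hv : 0 < vstar)
    (heq1 : a * ustar = H vstar) (heq2 : b * vstar = G ustar)
    (huniq : ∀ p q : ℝ, 0 < p → 0 < q → a * p = H q → b * q = G p →
      p = ustar ∧ q = vstar)
    (k : ℝ) (hk : 0 < k)
    (hk2 : max (deriv H 0 * vstar / (d1 * ustar)) (deriv G 0 * ustar / (d2 * vstar))
      ≤ k ^ 2)
    (φ ψ : ℝ → ℝ)
    (hφ : ∀ x : ℝ, φ x = if x ≤ π / (2 * k) then ustar * Real.sin (k * x) else ustar)
    (hψ : ∀ x : ℝ, ψ x = if x ≤ π / (2 * k) then vstar * Real.sin (k * x) else vstar) :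
    ∀ c : ℝ, 0 ≤ c →
      (∀ x ∈ Set.Ioo 0 (π / (2 * k)),
        d1 * deriv (deriv φ) x - c * deriv φ x - a * φ x + H (ψ x) ≤ 0 ∧
        d2 * deriv (deriv ψ) x - c * deriv ψ x - b * ψ x + G (φ x) ≤ 0) ∧
      (∀ x : ℝ, π / (2 * k) < x →
        d1 * deriv (deriv φ) x - c * deriv φ x - a * φ x + H (ψ x) = 0 ∧
        d2 * deriv (deriv ψ) x - c * deriv ψ x - b * ψ x + G (φ x) = 0) := by
  obtain ⟨hφ1, hφ2, hφ3, hφ4⟩ := pw_derivs k ustar (π / (2 * k)) φ hφ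
  obtain ⟨hψ1, hψ2, hψ3, hψ4⟩ := pw_derivs k vstar (π / (2 * k)) ψ hψ
  have hHtan := tangent_bound H hHreg hH0 hH' hH''
  have hGtan := tangent_bound G hGreg hG0 hG' hG''
  have hH0pos : 0 < deriv H 0 := hH' 0 le_rfl
  have hG0pos : 0 < deriv G 0 := hG' 0 le_rfl
  have hkA : deriv H 0 * vstar ≤ d1 * ustar * k ^ 2 := by
    have h := le_trans (le_max_left _ _) hk2
    rw [div_le_iff₀ (mul_pos hd1 hu)] at h
    nlinarith
  have hkB : deriv G 0 * ustar ≤ d2 * vstar * k ^ 2 := by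
    have h := le_trans (le_max_right _ _) hk2
    rw [div_le_iff₀ (mul_pos hd2 hv)] at h
    nlinarith
  intro c hc
  constructor
  · rintro x ⟨hx0, hxL⟩
    have hkx : 0 < k * x := mul_pos hk hx0
    have hkx2 : k * x < π / 2 := by
      have := (mul_lt_mul_iff_right₀ hk).mpr hxL
      rw [mul_div_assoc'] at this
      calc k * x < k * π / (2 * k) := this
        _ = π / 2 := by field_simp
    have hs : 0 < Real.sin (k * x) :=
      Real.sin_pos_of_pos_of_lt_pi hkx (lt_trans hkx2 (by linarith [Real.pi_pos]))
    have hcos : 0 ≤ Real.cos (k * x) :=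
      Real.cos_nonneg_of_mem_Icc ⟨by linarith, hkx2.le⟩
    have hφx : φ x = ustar * Real.sin (k * x) := by rw [hφ, if_pos hxL.le]
    have hψx : ψ x = vstar * Real.sin (k * x) := by rw [hψ, if_pos hxL.le]
    rw [hφ1 x hxL, hφ2 x hxL, hψ1 x hxL, hψ2 x hxL, hφx, hψx]
    constructor
    · have hHb := hHtan (vstar * Real.sin (k * x)) (mul_pos hv hs)
      nlinarith [mul_nonneg (mul_nonneg (mul_nonneg hc hv.le) hk.le) hcos,
        mul_nonneg (mul_nonneg (mul_nonneg hc hu.le) hk.le) hcos,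
        mul_nonneg (mul_nonneg ha.le hu.le) hs.le,
        mul_le_mul_of_nonneg_right hkA hs.le]
    · have hGb := hGtan (ustar * Real.sin (k * x)) (mul_pos hu hs)
      nlinarith [mul_nonneg (mul_nonneg (mul_nonneg hc hv.le) hk.le) hcos,
        mul_nonneg (mul_nonneg hb.le hv.le) hs.le,
        mul_le_mul_of_nonneg_right hkB hs.le]
  · intro x hx
    have hφx : φ x = ustar := by rw [hφ, if_neg (not_le.mpr hx)]
    have hψx : ψ x = vstar := by rw [hψ, if_neg (not_le.mpr hx)]
    rw [hφ3 x hx, hφ4 x hx, hψ3 x hx, hψ4 x hx, hφx, hψx]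
    constructor <;> linarith
end

section
/- Let $\hat P(\lambda)=(d_1\lambda^2-c\lambda-a)(d_2\lambda^2-c\lambda-b)-H'(v^*)G'(u^*)$ where $d_1,d_2,a,b>0$, $c\ge 0$, and $0<H'(v^*)G'(u^*)<ab$. Then $\hat P$ has four distinct real roots $\hat\lambda_1<\hat\lambda_2<0<\hat\lambda_3<\hat\lambda_4$ satisfying $\hat\lambda_1<\lambda_j^-<\hat\lambda_2$ and $\hat\lambda_3<\lambda_j^+<\hat\lambda_4$ for $j=1,2$, where $\lambda_1^{\pm}=\frac{c\pm\sqrt{c^2+4d_1a}}{2d_1}$, $\lambda_2^{\pm}=\frac{c\pm\sqrt{c^2+4d_2b}}{2d_2}$. -/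
set_option maxHeartbeats 1000000

private lemma quad_aux (d a c : ℝ) (hd : 0 < d) (ha : 0 < a) (hc : 0 ≤ c) :
    (d * ((c - Real.sqrt (c ^ 2 + 4 * d * a)) / (2 * d)) ^ 2
      - c * ((c - Real.sqrt (c ^ 2 + 4 * d * a)) / (2 * d)) - a = 0) ∧
    (d * ((c + Real.sqrt (c ^ 2 + 4 * d * a)) / (2 * d)) ^ 2
      - c * ((c + Real.sqrt (c ^ 2 + 4 * d * a)) / (2 * d)) - a = 0) ∧
    (c - Real.sqrt (c ^ 2 + 4 * d * a)) / (2 * d) < 0 ∧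
    0 < (c + Real.sqrt (c ^ 2 + 4 * d * a)) / (2 * d) := by
  set s := Real.sqrt (c ^ 2 + 4 * d * a) with hs
  have hnn : (0:ℝ) ≤ c ^ 2 + 4 * d * a := by positivity
  have hs0 : 0 ≤ s := Real.sqrt_nonneg _
  have hs2 : s ^ 2 = c ^ 2 + 4 * d * a := Real.sq_sqrt hnn
  have hsc : c < s := by nlinarith
  refine ⟨?_, ?_, ?_, ?_⟩
  · field_simp
    nlinarith [hs2]
  · field_simp
    nlinarith [hs2]
  · apply div_neg_of_neg_of_pos <;> nlinarith
  · apply div_pos <;> nlinarith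

private lemma ivt_aux {f : ℝ → ℝ} (hf : Continuous f) {x y : ℝ} (hxy : x < y)
    (h : f x < 0 ∧ 0 < f y ∨ 0 < f x ∧ f y < 0) : ∃ z, x < z ∧ z < y ∧ f z = 0 := by
  rcases h with ⟨h1, h2⟩ | ⟨h1, h2⟩
  · have := intermediate_value_Ioo hxy.le hf.continuousOn (a := x) (b := y)
    have h0 : (0:ℝ) ∈ Set.Ioo (f x) (f y) := ⟨h1, h2⟩
    obtain ⟨z, hz, hz0⟩ := this h0
    exact ⟨z, hz.1, hz.2, hz0⟩
  · have := intermediate_value_Ioo' hxy.le hf.continuousOn (a := x) (b := y)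
    have h0 : (0:ℝ) ∈ Set.Ioo (f y) (f x) := ⟨h2, h1⟩
    obtain ⟨z, hz, hz0⟩ := this h0
    exact ⟨z, hz.1, hz.2, hz0⟩


private lemma Qbig_neg (d a c K N : ℝ) (hd : 0 < d) (ha : 0 < a) (hc : 0 ≤ c) (hK : 0 < K)
    (hN1 : 1 ≤ N) (hNa : a + K + 1 ≤ d * N) : K + 1 ≤ d * (-N) ^ 2 - c * (-N) - a := by
  nlinarith [mul_nonneg (sub_nonneg.mpr hNa) (by linarith : (0:ℝ) ≤ N),
    mul_nonneg (by linarith : (0:ℝ) ≤ a + K + 1) (by linarith : (0:ℝ) ≤ N - 1),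
    mul_nonneg hc (by linarith : (0:ℝ) ≤ N)]

private lemma Qbig_pos (d a c K M : ℝ) (hd : 0 < d) (ha : 0 < a) (hK : 0 < K)
    (hM1 : 1 ≤ M) (hMa : c + a + K + 1 ≤ d * M) : K + 1 ≤ d * M ^ 2 - c * M - a := by
  nlinarith [mul_nonneg (sub_nonneg.mpr hMa) (by linarith : (0:ℝ) ≤ M),
    mul_nonneg (by linarith : (0:ℝ) ≤ a + K + 1) (by linarith : (0:ℝ) ≤ M - 1)]

private lemma far_pos (u v K : ℝ) (hK : 0 < K) (hu : K + 1 ≤ u) (hv : K + 1 ≤ v) :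
    0 < u * v - K := by
  nlinarith [mul_le_mul hu hv (by linarith) (by linarith)]

open Polynomial in
private lemma card_roots_aux (d1 d2 a b c K : ℝ) (hd1 : d1 ≠ 0) (hd2 : d2 ≠ 0)
    (s : Finset ℝ) (hs : ∀ x ∈ s, (d1*x^2-c*x-a)*(d2*x^2-c*x-b)-K = 0) :
    s.card ≤ 4 := by
  set p : Polynomial ℝ := (C d1 * X^2 - C c * X - C a) * (C d2 * X^2 - C c * X - C b) - C K
    with hp
  have hdeg : p.natDegree = 4 := by
    rw [hp]; compute_degree!
  have hp0 : p ≠ 0 := fun h => by simp [h] at hdeg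
  have hsub : s.val ≤ p.roots := by
    rw [Multiset.le_iff_subset s.nodup]
    intro x hx
    rw [Polynomial.mem_roots hp0]
    have : p.eval x = (d1*x^2-c*x-a)*(d2*x^2-c*x-b)-K := by simp [hp]
    rw [Polynomial.IsRoot, this]
    exact hs x hx
  calc s.card = s.val.card := rfl
    _ ≤ p.roots.card := Multiset.card_le_card hsub
    _ ≤ p.natDegree := p.card_roots'
    _ = 4 := hdeg

/-- The characteristic polynomial at the positive equilibrium,
`P̂(λ) = (d₁λ²-cλ-a)(d₂λ²-cλ-b) - K` with `0 < K < ab` (here `K`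
stands for `H'(v*)G'(u*)`), has four distinct real roots
`λ̂₁ < λⱼ⁻ < λ̂₂ < 0 < λ̂₃ < λⱼ⁺ < λ̂₄` for `j = 1, 2`. -/
theorem stmt8 (d1 d2 a b c K : ℝ) (hd1 : 0 < d1) (hd2 : 0 < d2)
    (ha : 0 < a) (hb : 0 < b) (hc : 0 ≤ c) (hK0 : 0 < K) (hKab : K < a * b)
    (Phat : ℝ → ℝ)
    (hP : ∀ l : ℝ, Phat l = (d1 * l ^ 2 - c * l - a) * (d2 * l ^ 2 - c * l - b) - K)
    (l1m l1p l2m l2p : ℝ)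
    (h1m : l1m = (c - Real.sqrt (c ^ 2 + 4 * d1 * a)) / (2 * d1))
    (h1p : l1p = (c + Real.sqrt (c ^ 2 + 4 * d1 * a)) / (2 * d1))
    (h2m : l2m = (c - Real.sqrt (c ^ 2 + 4 * d2 * b)) / (2 * d2))
    (h2p : l2p = (c + Real.sqrt (c ^ 2 + 4 * d2 * b)) / (2 * d2)) :
    ∃ L1 L2 L3 L4 : ℝ,
      Phat L1 = 0 ∧ Phat L2 = 0 ∧ Phat L3 = 0 ∧ Phat L4 = 0 ∧
      L1 < L2 ∧ L2 < 0 ∧ 0 < L3 ∧ L3 < L4 ∧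
      (L1 < l1m ∧ L1 < l2m ∧ l1m < L2 ∧ l2m < L2) ∧
      (L3 < l1p ∧ L3 < l2p ∧ l1p < L4 ∧ l2p < L4) ∧
      (∀ l : ℝ, Phat l = 0 → l = L1 ∨ l = L2 ∨ l = L3 ∨ l = L4) := by
  obtain ⟨hq1m, hq1p, h1mneg, h1ppos⟩ := quad_aux d1 a c hd1 ha hc
  obtain ⟨hq2m, hq2p, h2mneg, h2ppos⟩ := quad_aux d2 b c hd2 hb hc
  rw [← h1m] at hq1m h1mneg
  rw [← h1p] at hq1p h1ppos
  rw [← h2m] at hq2m h2mneg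
  rw [← h2p] at hq2p h2ppos
  -- Phat values at the quadratic roots
  have hP1m : Phat l1m = -K := by rw [hP, hq1m]; ring
  have hP1p : Phat l1p = -K := by rw [hP, hq1p]; ring
  have hP2m : Phat l2m = -K := by rw [hP]; rw [hq2m]; ring
  have hP2p : Phat l2p = -K := by rw [hP]; rw [hq2p]; ring
  have hP0 : Phat 0 = a * b - K := by rw [hP]; ring
  have hP0pos : 0 < Phat 0 := by rw [hP0]; linarith
  have hcont : Continuous Phat := by
    have : Phat = fun l => (d1 * l ^ 2 - c * l - a) * (d2 * l ^ 2 - c * l - b) - K :=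
      funext hP
    rw [this]; fun_prop
  have hPm1 : Phat (min l1m l2m) = -K := by rcases min_cases l1m l2m with ⟨h, _⟩ | ⟨h, _⟩ <;>
    rw [h] <;> assumption
  have hPM1 : Phat (max l1m l2m) = -K := by rcases max_cases l1m l2m with ⟨h, _⟩ | ⟨h, _⟩ <;>
    rw [h] <;> assumption
  have hPm2 : Phat (min l1p l2p) = -K := by rcases min_cases l1p l2p with ⟨h, _⟩ | ⟨h, _⟩ <;>
    rw [h] <;> assumption
  have hPM2 : Phat (max l1p l2p) = -K := by rcases max_cases l1p l2p with ⟨h, _⟩ | ⟨h, _⟩ <;>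
    rw [h] <;> assumption
  -- far left point
  set N : ℝ := 1 + max 0 (-l1m) + max 0 (-l2m) + (a+K+1)/d1 + (b+K+1)/d2 with hN
  have hN1 : 1 ≤ N := by
    have h1 : 0 ≤ max 0 (-l1m) := le_max_left _ _
    have h2 : 0 ≤ max 0 (-l2m) := le_max_left _ _
    have h3 : 0 ≤ (a+K+1)/d1 := by positivity
    have h4 : 0 ≤ (b+K+1)/d2 := by positivity
    rw [hN]; linarith
  have hNa : a + K + 1 ≤ d1 * N := by
    have h3 : (a+K+1)/d1 ≤ N := by
      have h1 : 0 ≤ max 0 (-l1m) := le_max_left _ _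
      have h2 : 0 ≤ max 0 (-l2m) := le_max_left _ _
      have h4 : 0 ≤ (b+K+1)/d2 := by positivity
      rw [hN]; linarith
    calc a + K + 1 = d1 * ((a+K+1)/d1) := by field_simp
      _ ≤ d1 * N := mul_le_mul_of_nonneg_left h3 hd1.le
  have hNb : b + K + 1 ≤ d2 * N := by
    have h3 : (b+K+1)/d2 ≤ N := by
      have h1 : 0 ≤ max 0 (-l1m) := le_max_left _ _
      have h2 : 0 ≤ max 0 (-l2m) := le_max_left _ _
      have h4 : 0 ≤ (a+K+1)/d1 := by positivity
      rw [hN]; linarith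
    calc b + K + 1 = d2 * ((b+K+1)/d2) := by field_simp
      _ ≤ d2 * N := mul_le_mul_of_nonneg_left h3 hd2.le
  have hNl1 : -N < l1m := by
    have h1 : -l1m ≤ max 0 (-l1m) := le_max_right _ _
    have h2 : 0 ≤ max 0 (-l2m) := le_max_left _ _
    have h3 : 0 ≤ (a+K+1)/d1 := by positivity
    have h4 : 0 ≤ (b+K+1)/d2 := by positivity
    rw [hN]; linarith
  have hNl2 : -N < l2m := by
    have h1 : -l2m ≤ max 0 (-l2m) := le_max_right _ _
    have h2 : 0 ≤ max 0 (-l1m) := le_max_left _ _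
    have h3 : 0 ≤ (a+K+1)/d1 := by positivity
    have h4 : 0 ≤ (b+K+1)/d2 := by positivity
    rw [hN]; linarith
  clear_value N
  have hPN : 0 < Phat (-N) := by
    rw [hP]
    exact far_pos _ _ K hK0 (Qbig_neg d1 a c K N hd1 ha hc hK0 hN1 (by linarith))
      (Qbig_neg d2 b c K N hd2 hb hc hK0 hN1 (by linarith))
  -- far right point
  set M : ℝ := 1 + max 0 l1p + max 0 l2p + (c+a+K+1)/d1 + (c+b+K+1)/d2 with hM
  have hM1' : 1 ≤ M := by
    have h1 : 0 ≤ max 0 l1p := le_max_left _ _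
    have h2 : 0 ≤ max 0 l2p := le_max_left _ _
    have h3 : 0 ≤ (c+a+K+1)/d1 := by positivity
    have h4 : 0 ≤ (c+b+K+1)/d2 := by positivity
    rw [hM]; linarith
  have hMa : c + a + K + 1 ≤ d1 * M := by
    have h3 : (c+a+K+1)/d1 ≤ M := by
      have h1 : 0 ≤ max 0 l1p := le_max_left _ _
      have h2 : 0 ≤ max 0 l2p := le_max_left _ _
      have h4 : 0 ≤ (c+b+K+1)/d2 := by positivity
      rw [hM]; linarith
    calc c + a + K + 1 = d1 * ((c+a+K+1)/d1) := by field_simp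
      _ ≤ d1 * M := mul_le_mul_of_nonneg_left h3 hd1.le
  have hMb : c + b + K + 1 ≤ d2 * M := by
    have h3 : (c+b+K+1)/d2 ≤ M := by
      have h1 : 0 ≤ max 0 l1p := le_max_left _ _
      have h2 : 0 ≤ max 0 l2p := le_max_left _ _
      have h4 : 0 ≤ (c+a+K+1)/d1 := by positivity
      rw [hM]; linarith
    calc c + b + K + 1 = d2 * ((c+b+K+1)/d2) := by field_simp
      _ ≤ d2 * M := mul_le_mul_of_nonneg_left h3 hd2.le
  have hMl1 : l1p < M := by
    have h1 : l1p ≤ max 0 l1p := le_max_right _ _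
    have h2 : 0 ≤ max 0 l2p := le_max_left _ _
    have h3 : 0 ≤ (c+a+K+1)/d1 := by positivity
    have h4 : 0 ≤ (c+b+K+1)/d2 := by positivity
    rw [hM]; linarith
  have hMl2 : l2p < M := by
    have h1 : l2p ≤ max 0 l2p := le_max_right _ _
    have h2 : 0 ≤ max 0 l1p := le_max_left _ _
    have h3 : 0 ≤ (c+a+K+1)/d1 := by positivity
    have h4 : 0 ≤ (c+b+K+1)/d2 := by positivity
    rw [hM]; linarith
  clear_value M
  have hPM : 0 < Phat M := by
    rw [hP]
    exact far_pos _ _ K hK0 (Qbig_pos d1 a c K M hd1 ha hK0 hM1' hMa)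
      (Qbig_pos d2 b c K M hd2 hb hK0 hM1' hMb)
  -- the four roots by IVT
  have hNm1 : -N < (min l1m l2m) := lt_min hNl1 hNl2
  have hM10 : (max l1m l2m) < 0 := max_lt h1mneg h2mneg
  have h0m2 : (0:ℝ) < (min l1p l2p) := lt_min h1ppos h2ppos
  have hM2M : (max l1p l2p) < M := max_lt hMl1 hMl2
  obtain ⟨L1, hL1a, hL1b, hL1r⟩ := ivt_aux hcont hNm1 (Or.inr ⟨hPN, by rw [hPm1]; linarith⟩)
  obtain ⟨L2, hL2a, hL2b, hL2r⟩ := ivt_aux hcont hM10 (Or.inl ⟨by rw [hPM1]; linarith, hP0pos⟩)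
  obtain ⟨L3, hL3a, hL3b, hL3r⟩ := ivt_aux hcont h0m2 (Or.inr ⟨hP0pos, by rw [hPm2]; linarith⟩)
  obtain ⟨L4, hL4a, hL4b, hL4r⟩ := ivt_aux hcont hM2M (Or.inl ⟨by rw [hPM2]; linarith, hPM⟩)
  have hm1l1 : (min l1m l2m) ≤ l1m := min_le_left _ _
  have hm1l2 : (min l1m l2m) ≤ l2m := min_le_right _ _
  have hl1M1 : l1m ≤ (max l1m l2m) := le_max_left _ _
  have hl2M1 : l2m ≤ (max l1m l2m) := le_max_right _ _
  have hm2l1 : (min l1p l2p) ≤ l1p := min_le_left _ _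
  have hm2l2 : (min l1p l2p) ≤ l2p := min_le_right _ _
  have hl1M2 : l1p ≤ (max l1p l2p) := le_max_left _ _
  have hl2M2 : l2p ≤ (max l1p l2p) := le_max_right _ _
  have hm1M1 : (min l1m l2m) ≤ (max l1m l2m) := le_trans hm1l1 hl1M1
  have hm2M2 : (min l1p l2p) ≤ (max l1p l2p) := le_trans hm2l1 hl1M2
  have ord12 : L1 < L2 := lt_of_lt_of_le hL1b (le_trans hm1M1 hL2a.le)
  have ord34 : L3 < L4 := lt_of_lt_of_le hL3b (le_trans hm2M2 hL4a.le)
  refine ⟨L1, L2, L3, L4, hL1r, hL2r, hL3r, hL4r, ord12, hL2b, hL3a, ord34,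
    ⟨lt_of_lt_of_le hL1b hm1l1, lt_of_lt_of_le hL1b hm1l2,
     lt_of_le_of_lt hl1M1 hL2a, lt_of_le_of_lt hl2M1 hL2a⟩,
    ⟨lt_of_lt_of_le hL3b hm2l1, lt_of_lt_of_le hL3b hm2l2,
     lt_of_le_of_lt hl1M2 hL4a, lt_of_le_of_lt hl2M2 hL4a⟩, ?_⟩
  intro l hl
  by_contra hcon
  push_neg at hcon
  obtain ⟨hn1, hn2, hn3, hn4⟩ := hcon
  have ord23 : L2 < L3 := lt_trans hL2b hL3a
  have h12 : L1 ≠ L2 := ne_of_lt ord12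
  have h13 : L1 ≠ L3 := ne_of_lt (lt_trans ord12 ord23)
  have h14 : L1 ≠ L4 := ne_of_lt (lt_trans (lt_trans ord12 ord23) ord34)
  have h23 : L2 ≠ L3 := ne_of_lt ord23
  have h24 : L2 ≠ L4 := ne_of_lt (lt_trans ord23 ord34)
  have h34 : L3 ≠ L4 := ne_of_lt ord34
  set s : Finset ℝ := {L1, L2, L3, L4, l} with hsdef
  have hcard : s.card = 5 := by
    rw [hsdef]
    rw [Finset.card_insert_of_notMem (by simp [h12, h13, h14, Ne.symm hn1]),
      Finset.card_insert_of_notMem (by simp [h23, h24, Ne.symm hn2]),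
      Finset.card_insert_of_notMem (by simp [h34, Ne.symm hn3]),
      Finset.card_insert_of_notMem (by simp [Ne.symm hn4]),
      Finset.card_singleton]
  have hroots : ∀ x ∈ s, (d1*x^2-c*x-a)*(d2*x^2-c*x-b)-K = 0 := by
    intro x hx
    rw [hsdef] at hx
    simp only [Finset.mem_insert, Finset.mem_singleton] at hx
    have hx0 : Phat x = 0 := by
      rcases hx with h | h | h | h | h <;> rw [h] <;> assumption
    rw [hP] at hx0
    linarith [hx0]
  have := card_roots_aux d1 d2 a b c K (ne_of_gt hd1) (ne_of_gt hd2) s hroots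
  omega
end

section
/- Let $(\varphi,\psi)$ and $(\varphi_1,\psi_1)$ be two monotone solutions of the semi-wave problem: $d_1\varphi''-c\varphi'-a\varphi+H(\psi)=0$, $d_2\psi''-c\psi'-b\psi+G(\varphi)=0$ on $(0,\infty)$, with $\varphi(0)=\psi(0)=0$, $(\varphi,\psi)(\infty)=(u^*,v^*)$, $\varphi',\psi'>0$, and the same for $(\varphi_1,\psi_1)$. Assume (H) holds with $au^*=H(v^*)$, $bv^*=G(u^*)$ and $H$ strictly concave. If $\rho^*:=\inf\{\rho\ge 1:\rho\varphi\ge\varphi_1\text{ and }\rho\psi\ge\psi_1\text{ on }(0,\infty)\}$ satisfies $\rho^*>1$, then $-d_1(\rho^*\varphi-\varphi_1)''+c(\rho^*\varphi-\varphi_1)'+a(\rho^*\varphi-\varphi_1)>0$ on $(0,\infty)$. -/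
/-!
The left-hand side equals `ρ* H(ψ) - H(ψ₁)` by the two `φ`-equations. Since `ψ > 0`, strict
concavity of `H` with `H 0 = 0` gives `H(ρ* ψ) < ρ* H(ψ)`, and `ψ₁ ≤ ρ* ψ` with monotonicity of
`H` gives `H(ψ₁) ≤ H(ρ* ψ)`.
-/

open Set

theorem StrictConcaveOn.map_mul_lt_mul_map {H : ℝ → ℝ} (hH : StrictConcaveOn ℝ (Ici 0) H)
    (hH0 : H 0 = 0) {ρ t : ℝ} (hρ : 1 < ρ) (ht : 0 < t) : H (ρ * t) < ρ * H t := by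
  have hρt : 0 < ρ * t := by positivity
  have hslope := hH.secant_strict_mono (a := 0) (x := t) (y := ρ * t) self_mem_Ici ht.le hρt.le
    ht.ne' hρt.ne' (lt_mul_of_one_lt_left ht hρ)
  rw [hH0, sub_zero, sub_zero, sub_zero, sub_zero, div_lt_div_iff₀ hρt ht] at hslope
  nlinarith

theorem strictMonoOn_Ici_of_deriv_pos {f : ℝ → ℝ} {a : ℝ} (hf' : ∀ y, a ≤ y → 0 < deriv f y) :
    StrictMonoOn f (Ici a) := by
  have hdiff : ∀ y ∈ Ici a, DifferentiableAt ℝ f y := fun y hy =>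
    differentiableAt_of_deriv_ne_zero (hf' y hy).ne'
  refine strictMonoOn_of_deriv_pos (convex_Ici a)
    (fun y hy => (hdiff y hy).continuousAt.continuousWithinAt) fun y hy => hf' y ?_
  rw [interior_Ici] at hy
  exact hy.le

theorem deriv_const_mul_sub {f g : ℝ → ℝ} {x : ℝ} (r : ℝ) (hf : DifferentiableAt ℝ f x)
    (hg : DifferentiableAt ℝ g x) :
    deriv (fun y => r * f y - g y) x = r * deriv f x - deriv g x := by
  rw [deriv_fun_sub (hf.const_mul r) hg, deriv_const_mul r hf]

theorem deriv_deriv_const_mul_sub {f g : ℝ → ℝ} {s : Set ℝ} {x : ℝ} (r : ℝ) (hs : IsOpen s)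
    (hf : ContDiffOn ℝ 2 f s) (hg : ContDiffOn ℝ 2 g s) (hx : x ∈ s) :
    deriv (deriv fun y => r * f y - g y) x = r * deriv (deriv f) x - deriv (deriv g) x := by
  have hdiff : ∀ {h : ℝ → ℝ}, ContDiffOn ℝ 2 h s → ∀ y ∈ s, DifferentiableAt ℝ h y :=
    fun hh y hy => (hh.differentiableOn two_ne_zero y hy).differentiableAt (hs.mem_nhds hy)
  have hdiff' : ∀ {h : ℝ → ℝ}, ContDiffOn ℝ 2 h s → DifferentiableAt ℝ (deriv h) x :=
    fun hh => ((hh.deriv_of_isOpen hs (by norm_num)).differentiableOn one_ne_zero x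
      hx).differentiableAt (hs.mem_nhds hx)
  have hderiv : deriv (fun y => r * f y - g y) =ᶠ[nhds x] fun y => r * deriv f y - deriv g y := by
    filter_upwards [hs.mem_nhds hx] with y hy
    exact deriv_const_mul_sub r (hdiff hf y hy) (hdiff hg y hy)
  rw [hderiv.deriv_eq, deriv_const_mul_sub r (hdiff' hf) (hdiff' hg)]

theorem stmt13_general (a b c d1 d2 : ℝ)
    (H G : ℝ → ℝ)
    (hH0 : H 0 = 0)
    (hHmono : MonotoneOn H (Set.Ici 0))
    (hHconc : StrictConcaveOn ℝ (Set.Ici 0) H)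
    (φ ψ φ1 ψ1 : ℝ → ℝ)
    (hreg : ContDiffOn ℝ 2 φ (Set.Ici 0) ∧ ContDiffOn ℝ 2 ψ (Set.Ici 0) ∧
      ContDiffOn ℝ 2 φ1 (Set.Ici 0) ∧ ContDiffOn ℝ 2 ψ1 (Set.Ici 0))
    (hode : ∀ x : ℝ, 0 < x →
      d1 * deriv (deriv φ) x - c * deriv φ x - a * φ x + H (ψ x) = 0 ∧
      d2 * deriv (deriv ψ) x - c * deriv ψ x - b * ψ x + G (φ x) = 0)
    (hode1 : ∀ x : ℝ, 0 < x →
      d1 * deriv (deriv φ1) x - c * deriv φ1 x - a * φ1 x + H (ψ1 x) = 0 ∧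
      d2 * deriv (deriv ψ1) x - c * deriv ψ1 x - b * ψ1 x + G (φ1 x) = 0)
    (hbc : φ 0 = 0 ∧ ψ 0 = 0 ∧ φ1 0 = 0 ∧ ψ1 0 = 0)
    (hmono : (∀ x : ℝ, 0 ≤ x → 0 < deriv φ x ∧ 0 < deriv ψ x) ∧
      (∀ x : ℝ, 0 ≤ x → 0 < deriv φ1 x ∧ 0 < deriv ψ1 x))
    (ρstar : ℝ)
    (hρdom : ∀ x : ℝ, 0 < x → φ1 x ≤ ρstar * φ x ∧ ψ1 x ≤ ρstar * ψ x)
    (hρgt : 1 < ρstar) :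
    ∀ x : ℝ, 0 < x →
      0 < -d1 * deriv (deriv (fun y => ρstar * φ y - φ1 y)) x
        + c * deriv (fun y => ρstar * φ y - φ1 y) x
        + a * (ρstar * φ x - φ1 x) := by
  intro x hx
  obtain ⟨hφ, -, hφ1, -⟩ := hreg
  have hψ : 0 < ψ x := by
    simpa [hbc.2.1] using strictMonoOn_Ici_of_deriv_pos (fun y hy => (hmono.1 y hy).2)
      self_mem_Ici hx.le hx
  have hψ1 : 0 < ψ1 x := by
    simpa [hbc.2.2.2] using strictMonoOn_Ici_of_deriv_pos (fun y hy => (hmono.2 y hy).2)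
      self_mem_Ici hx.le hx
  rw [deriv_deriv_const_mul_sub ρstar isOpen_Ioi (hφ.mono Ioi_subset_Ici_self)
      (hφ1.mono Ioi_subset_Ici_self) hx,
    deriv_const_mul_sub ρstar (differentiableAt_of_deriv_ne_zero (hmono.1 x hx.le).1.ne')
      (differentiableAt_of_deriv_ne_zero (hmono.2 x hx.le).1.ne')]
  calc (0 : ℝ) < ρstar * H (ψ x) - H (ρstar * ψ x) :=
        sub_pos.2 (hHconc.map_mul_lt_mul_map hH0 hρgt hψ)
    _ ≤ ρstar * H (ψ x) - H (ψ1 x) := by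
        gcongr
        exact hHmono hψ1.le (mul_nonneg (by linarith) hψ.le) (hρdom x hx).2
    _ = _ := by linear_combination ρstar * (hode x hx).1 - (hode1 x hx).1

/-- If `ρ* > 1` is the infimum of the scalings `ρ ≥ 1` with
`(ρφ, ρψ) ≥ (φ₁, ψ₁)` for two monotone semi-waves, then
`-d₁(ρ*φ - φ₁)'' + c(ρ*φ - φ₁)' + a(ρ*φ - φ₁) > 0` on `(0, ∞)`. -/
theorem stmt13 (a b c d1 d2 ustar vstar : ℝ) (ha : 0 < a) (hb : 0 < b)
    (hc : 0 ≤ c) (hd1 : 0 < d1) (hd2 : 0 < d2)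
    (hu : 0 < ustar) (hv : 0 < vstar)
    (H G : ℝ → ℝ)
    (hHcont : ContinuousOn H (Set.Ici 0)) (hGcont : ContinuousOn G (Set.Ici 0))
    (hH0 : H 0 = 0) (hG0 : G 0 = 0)
    (hHmono : MonotoneOn H (Set.Ici 0)) (hGmono : MonotoneOn G (Set.Ici 0))
    (hHconc : StrictConcaveOn ℝ (Set.Ici 0) H) (hGconc : StrictConcaveOn ℝ (Set.Ici 0) G)
    (heq1 : a * ustar = H vstar) (heq2 : b * vstar = G ustar)
    (φ ψ φ1 ψ1 : ℝ → ℝ)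
    (hreg : ContDiffOn ℝ 2 φ (Set.Ici 0) ∧ ContDiffOn ℝ 2 ψ (Set.Ici 0) ∧
      ContDiffOn ℝ 2 φ1 (Set.Ici 0) ∧ ContDiffOn ℝ 2 ψ1 (Set.Ici 0))
    (hode : ∀ x : ℝ, 0 < x →
      d1 * deriv (deriv φ) x - c * deriv φ x - a * φ x + H (ψ x) = 0 ∧
      d2 * deriv (deriv ψ) x - c * deriv ψ x - b * ψ x + G (φ x) = 0)
    (hode1 : ∀ x : ℝ, 0 < x →
      d1 * deriv (deriv φ1) x - c * deriv φ1 x - a * φ1 x + H (ψ1 x) = 0 ∧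
      d2 * deriv (deriv ψ1) x - c * deriv ψ1 x - b * ψ1 x + G (φ1 x) = 0)
    (hbc : φ 0 = 0 ∧ ψ 0 = 0 ∧ φ1 0 = 0 ∧ ψ1 0 = 0)
    (hlim : Filter.Tendsto φ Filter.atTop (nhds ustar) ∧
      Filter.Tendsto ψ Filter.atTop (nhds vstar) ∧
      Filter.Tendsto φ1 Filter.atTop (nhds ustar) ∧
      Filter.Tendsto ψ1 Filter.atTop (nhds vstar))
    (hmono : (∀ x : ℝ, 0 ≤ x → 0 < deriv φ x ∧ 0 < deriv ψ x) ∧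
      (∀ x : ℝ, 0 ≤ x → 0 < deriv φ1 x ∧ 0 < deriv ψ1 x))
    (ρstar : ℝ)
    (hρstar : ρstar = sInf {ρ : ℝ | 1 ≤ ρ ∧
      ∀ x : ℝ, 0 < x → φ1 x ≤ ρ * φ x ∧ ψ1 x ≤ ρ * ψ x})
    (hρdom : ∀ x : ℝ, 0 < x → φ1 x ≤ ρstar * φ x ∧ ψ1 x ≤ ρstar * ψ x)
    (hρgt : 1 < ρstar) :
    ∀ x : ℝ, 0 < x →
      0 < -d1 * deriv (deriv (fun y => ρstar * φ y - φ1 y)) x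
        + c * deriv (fun y => ρstar * φ y - φ1 y) x
        + a * (ρstar * φ x - φ1 x) :=
  stmt13_general a b c d1 d2 H G hH0 hHmono hHconc φ ψ φ1 ψ1 hreg hode hode1 hbc hmono ρstar hρdom
    hρgt
end
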